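/- In A[ℝ≥0^2], the monomial ideal I = ({X^r Y^{1−r} : 0 ≤ r ≤ 1})R cannot be written as a finite sum of ideals of the form I_{α,ε}, and hence admits no finite m-irreducible decomposition. -/

import Mathlib

open scoped NNReal ENNReal

/-- The semigroup ring `R = A[ℝ≥0 ^ d]`. -/
abbrev SemiRng (A : Type*) [CommRing A] (d : ℕ) : Type _ :=
  AddMonoidAlgebra A (Fin d → ℝ≥0)

/-- The monomial `X^r` of `A[ℝ≥0 ^ d]`. -/
noncomputable def mono (A : Type*) [CommRing A] {d : ℕ} (r : Fin d → ℝ≥0) : SemiRng A d :=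
  AddMonoidAlgebra.single r 1

/-- An ideal of `A[ℝ≥0 ^ d]` is a monomial ideal if it is generated by a set of monomials. -/
def IsMonomialIdeal {A : Type*} [CommRing A] {d : ℕ} (I : Ideal (SemiRng A d)) : Prop :=
  ∃ E : Set (Fin d → ℝ≥0), I = Ideal.span (mono A '' E)

/-- The set of (exponent vectors of) monomials contained in an ideal. -/
def monSet (A : Type*) [CommRing A] {d : ℕ} (I : Ideal (SemiRng A d)) :
    Set (Fin d → ℝ≥0) :=
  {r | mono A r ∈ I}

/-- `geq e r a` means `r ≥_e a`: `r ≥ a` if `e = 0` (false), `r > a` if `e = 1` (true);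
no finite `r` satisfies `r ≥_e ∞`. -/
def geq (e : Bool) (r : ℝ≥0) (a : ℝ≥0∞) : Prop :=
  if e then a < (r : ℝ≥0∞) else a ≤ (r : ℝ≥0∞)

/-- The ideal `J_{i,a,e}` generated by the pure powers `X_i^r` with `r ≥_e a`. -/
noncomputable def Jsingle (A : Type*) [CommRing A] {d : ℕ} (i : Fin d) (a : ℝ≥0∞)
    (e : Bool) : Ideal (SemiRng A d) :=
  Ideal.span {f | ∃ r : ℝ≥0, geq e r a ∧ f = mono A (Pi.single i r)}

/-- The ideal `J_{a,e}` generated by all pure powers `X_i^r` with `r ≥_{e i} a i`. -/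
noncomputable def Jideal (A : Type*) [CommRing A] {d : ℕ} (a : Fin d → ℝ≥0∞)
    (e : Fin d → Bool) : Ideal (SemiRng A d) :=
  Ideal.span {f | ∃ (i : Fin d) (r : ℝ≥0), geq (e i) r (a i) ∧ f = mono A (Pi.single i r)}

/-- The ideal `I_{a,e}` generated by all monomials `X^r` with `r i ≥_{e i} a i` for all `i`. -/
noncomputable def Iideal (A : Type*) [CommRing A] {d : ℕ} (a : Fin d → ℝ≥0∞)
    (e : Fin d → Bool) : Ideal (SemiRng A d) :=
  Ideal.span {f | ∃ r : Fin d → ℝ≥0, (∀ i, geq (e i) (r i) (a i)) ∧ f = mono A r}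

/-- A monomial ideal is m-irreducible if whenever it is an intersection of two monomial
ideals, it equals one of them. -/
def MIrred {A : Type*} [CommRing A] {d : ℕ} (I : Ideal (SemiRng A d)) : Prop :=
  ∀ J K : Ideal (SemiRng A d), IsMonomialIdeal J → IsMonomialIdeal K →
    I = J ⊓ K → I = J ∨ I = K


/-! `X^r` lies in the antidiagonal ideal `I` exactly when `r 0 + r 1 ≥ 1`. An ideal `I_{α,ε}` is
spanned by a product of half-lines, so if it contains `X^(u,1-u)` and `X^(v,1-v)` with `u < v`, it
also contains `X^(u,1-v) ∉ I`: each summand of a finite sum equal to `I` would capture at most one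
of the infinitely many antidiagonal generators.

An m-irreducible monomial ideal containing `X^(u,1-u)` contains `X^(u,0)` or `X^(0,1-u)`. Along an
increasing sequence `s` in `[0,1]`, pigeonhole over the finitely many components `J_t` gives
an `n` such that each `J_t` contains `X^(s n,0)` or `X^(0,1-s (n+1))`; then
`X^(s n,1-s (n+1)) ∈ ⋂ J_t = I`, which is impossible. -/

open Set

section

variable {A : Type*} [CommRing A] {d : ℕ}

theorem mono_mul (r s : Fin d → ℝ≥0) : mono A r * mono A s = mono A (r + s) := by
  simp [mono, AddMonoidAlgebra.single_mul_single]

theorem mono_mem_of_le {J : Ideal (SemiRng A d)} {r r' : Fin d → ℝ≥0} (h : r ≤ r')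
    (hr : mono A r ∈ J) : mono A r' ∈ J := by
  rw [← tsub_add_cancel_of_le h, ← mono_mul]
  exact J.mul_mem_left _ hr

theorem mem_span_mono_iff {E : Set (Fin d → ℝ≥0)} {f : SemiRng A d} :
    f ∈ Ideal.span (mono A '' E) ↔ ∀ m ∈ f.coeff.support, ∃ s ∈ E, s ≤ m := by
  simp_rw [le_iff_exists_add']
  exact AddMonoidAlgebra.mem_ideal_span_of'_image

theorem mono_mem_span_mono_iff [Nontrivial A] {E : Set (Fin d → ℝ≥0)} {r : Fin d → ℝ≥0} :
    mono A r ∈ Ideal.span (mono A '' E) ↔ ∃ s ∈ E, s ≤ r := by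
  rw [mem_span_mono_iff, mono, AddMonoidAlgebra.coeff_single, Finsupp.support_single]
  · simp
  · exact one_ne_zero

/-- `J = (J + (X^r)) ∩ (J + (X^r'))`, since a monomial in both lies in `J` or is a multiple of
`X^(r ⊔ r')`. -/
theorem MIrred.mono_mem_or_of_sup_mem [Nontrivial A] {J : Ideal (SemiRng A d)}
    (hm : IsMonomialIdeal J) (hJ : MIrred J) {r r' : Fin d → ℝ≥0}
    (h : mono A (r ⊔ r') ∈ J) :
    mono A r ∈ J ∨ mono A r' ∈ J := by
  obtain ⟨E, rfl⟩ := hm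
  have hsplit : Ideal.span (mono A '' E) =
      Ideal.span (mono A '' insert r E) ⊓ Ideal.span (mono A '' insert r' E) := by
    refine le_antisymm (le_inf (Ideal.span_mono (image_mono (subset_insert _ _)))
      (Ideal.span_mono (image_mono (subset_insert _ _)))) fun f ⟨hf, hf'⟩ => ?_
    obtain ⟨s, hsE, hsr⟩ := mono_mem_span_mono_iff.mp h
    refine mem_span_mono_iff.mpr fun m hm => ?_
    obtain ⟨q, rfl | hq, hqm⟩ := mem_span_mono_iff.mp hf m hm
    · obtain ⟨q', rfl | hq', hq'm⟩ := mem_span_mono_iff.mp hf' m hm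
      · exact ⟨s, hsE, hsr.trans (sup_le hqm hq'm)⟩
      · exact ⟨q', hq', hq'm⟩
    · exact ⟨q, hq, hqm⟩
  refine (hJ _ _ ⟨_, rfl⟩ ⟨_, rfl⟩ hsplit).imp (fun he => ?_) (fun he => ?_) <;>
    exact he ▸ Ideal.subset_span ⟨_, mem_insert _ _, rfl⟩

theorem geq_mono {e : Bool} {r r' : ℝ≥0} {a : ℝ≥0∞} (h : r ≤ r') (hr : geq e r a) :
    geq e r' a := by
  cases e
  · exact le_trans (α := ℝ≥0∞) hr (by exact_mod_cast h)
  · exact lt_of_lt_of_le (α := ℝ≥0∞) hr (by exact_mod_cast h)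

theorem Iideal_eq_span (a : Fin d → ℝ≥0∞) (e : Fin d → Bool) :
    Iideal A a e = Ideal.span (mono A '' {r | ∀ i, geq (e i) (r i) (a i)}) := by
  simp only [Iideal, Set.image, eq_comm]
  rfl

theorem mono_mem_iSup_Iideal_iff [Nontrivial A] {ι : Type*} {a : ι → Fin d → ℝ≥0∞}
    {e : ι → Fin d → Bool} {r : Fin d → ℝ≥0} :
    mono A r ∈ ⨆ t, Iideal A (a t) (e t) ↔ ∃ t, ∀ i, geq (e t i) (r i) (a t i) := by
  simp_rw [Iideal_eq_span, ← Ideal.span_iUnion, ← image_iUnion, mono_mem_span_mono_iff,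
    mem_iUnion]
  exact ⟨fun ⟨s, ⟨t, hs⟩, hsr⟩ => ⟨t, fun i => geq_mono (hsr i) (hs i)⟩,
    fun ⟨t, hr⟩ => ⟨r, ⟨t, hr⟩, le_rfl⟩⟩

theorem exists_forall_mem_or_mem_succ {ι α : Type*} [Finite ι] [Preorder α]
    {P L : ι → Set α} (hP : ∀ t, IsUpperSet (P t)) {s : ℕ → α} (hs : Monotone s)
    (hcover : ∀ t n, s n ∈ P t ∨ s n ∈ L t) :
    ∃ n, ∀ t, s n ∈ P t ∨ s (n + 1) ∈ L t := by
  by_contra! hbad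
  choose τ hτP hτL using hbad
  refine not_injective_infinite_finite τ fun m n hmn => ?_
  -- `s (i + 1) ∉ L (τ i)` puts `s (i + 1)`, hence every later `s j`, into `P (τ i)`
  have key : ∀ {i j}, τ i = τ j → ¬ i < j := fun {i j} hij hlt =>
    hτP j (hij ▸ hP (τ i) (hs hlt) ((hcover _ _).resolve_right (hτL i)))
  rcases lt_trichotomy m n with h | h | h
  exacts [(key hmn h).elim, h, (key hmn.symm h).elim]

noncomputable def antidiagonalIdeal (A : Type*) [CommRing A] : Ideal (SemiRng A 2) :=
  Ideal.span (mono A '' {p : Fin 2 → ℝ≥0 | p 0 + p 1 = 1})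

theorem mono_mem_antidiagonalIdeal_iff [Nontrivial A] {r : Fin 2 → ℝ≥0} :
    mono A r ∈ antidiagonalIdeal A ↔ 1 ≤ r 0 + r 1 := by
  rw [antidiagonalIdeal, mono_mem_span_mono_iff]
  constructor
  · rintro ⟨s, hs, hsr⟩
    exact hs.symm.le.trans (add_le_add (hsr 0) (hsr 1))
  · intro hr
    refine ⟨![min (r 0) 1, 1 - min (r 0) 1], by simp, fun i => ?_⟩
    fin_cases i
    · simp
    · rcases le_total (r 0) 1 with h | h
      · simpa [h, add_comm] using hr
      · simp [h]

theorem mono_mem_antidiagonalIdeal [Nontrivial A] {u : ℝ≥0} (hu : u ≤ 1) :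
    mono A ![u, 1 - u] ∈ antidiagonalIdeal A := by
  simp [mono_mem_antidiagonalIdeal_iff, add_tsub_cancel_of_le hu]

theorem mono_notMem_antidiagonalIdeal [Nontrivial A] {u v : ℝ≥0} (huv : u < v) (hv : v ≤ 1) :
    mono A ![u, 1 - v] ∉ antidiagonalIdeal A := by
  rw [mono_mem_antidiagonalIdeal_iff, not_le]
  calc u + (1 - v) < v + (1 - v) := by simpa using huv
    _ = 1 := add_tsub_cancel_of_le hv

theorem antidiagonalIdeal_ne_iSup_Iideal [Nontrivial A] {ι : Type*} [Finite ι]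
    (a : ι → Fin 2 → ℝ≥0∞) (e : ι → Fin 2 → Bool) :
    antidiagonalIdeal A ≠ ⨆ t, Iideal A (a t) (e t) := by
  intro h
  have hcover : ∀ u : Icc (0 : ℝ≥0) 1, ∃ t, ∀ i, geq (e t i) (![u.1, 1 - u] i) (a t i) := by
    intro u
    rw [← mono_mem_iSup_Iideal_iff (A := A), ← h]
    exact mono_mem_antidiagonalIdeal u.2.2
  choose τ hτ using hcover
  have : Infinite (Icc (0 : ℝ≥0) 1) := (Icc_infinite zero_lt_one).to_subtype
  obtain ⟨u, v, huv, hτuv⟩ := Finite.exists_ne_map_eq_of_infinite τ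
  -- `X^(u, 1-v)` takes its first exponent from `X^(u, 1-u)` and its second from `X^(v, 1-v)`
  have key : ∀ {u v}, τ u = τ v → u < v → False := fun {u v} huv hlt => by
    refine mono_notMem_antidiagonalIdeal (A := A) hlt v.2.2 ?_
    rw [h, mono_mem_iSup_Iideal_iff]
    refine ⟨τ v, Fin.forall_fin_two.mpr ⟨?_, ?_⟩⟩
    · simpa [huv] using hτ u 0
    · simpa using hτ v 1
  rcases huv.lt_or_gt with hlt | hlt
  exacts [key hτuv hlt, key hτuv.symm hlt]

theorem antidiagonalIdeal_ne_iInf_of_mIrred [Nontrivial A] {ι : Type*} [Finite ι]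
    (J : ι → Ideal (SemiRng A 2)) (hmon : ∀ t, IsMonomialIdeal (J t))
    (hirr : ∀ t, MIrred (J t)) :
    antidiagonalIdeal A ≠ ⨅ t, J t := by
  intro h
  obtain ⟨s, hs, hs01, -⟩ := exists_seq_strictMono_tendsto' (zero_lt_one' ℝ≥0)
  have hs1 : ∀ n, s n ≤ 1 := fun n => (hs01 n).2.le
  obtain ⟨n, hn⟩ := exists_forall_mem_or_mem_succ
    (P := fun t => {u | mono A ![u, 0] ∈ J t}) (L := fun t => {u | mono A ![0, 1 - u] ∈ J t})
    (fun t u v huv hu => mono_mem_of_le (by simpa [Pi.le_def, Fin.forall_fin_two]) hu)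
    hs.monotone fun t n => by
      refine (hirr t).mono_mem_or_of_sup_mem (hmon t) ?_
      have hmem := mono_mem_antidiagonalIdeal (A := A) (hs1 n)
      rw [h, Ideal.mem_iInf] at hmem
      convert hmem t using 2
      ext i
      fin_cases i <;> simp
  refine mono_notMem_antidiagonalIdeal (A := A) (hs n.lt_succ_self) (hs1 (n + 1)) ?_
  rw [h, Ideal.mem_iInf]
  intro t
  rcases hn t with ht | ht <;>
    exact mono_mem_of_le (by simp [Pi.le_def, Fin.forall_fin_two]) ht

end

variable {A : Type*} [CommRing A] [Nontrivial A] {d : ℕ}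

theorem stmt18 :
    (¬ ∃ (k : ℕ) (a : Fin k → Fin 2 → ℝ≥0∞) (e : Fin k → Fin 2 → Bool),
        Ideal.span (mono A '' {p : Fin 2 → ℝ≥0 | p 0 + p 1 = 1}) =
          ⨆ t, Iideal A (a t) (e t)) ∧
      (¬ ∃ (k : ℕ) (J : Fin k → Ideal (SemiRng A 2)),
        (∀ t, IsMonomialIdeal (J t)) ∧ (∀ t, MIrred (J t)) ∧
          Ideal.span (mono A '' {p : Fin 2 → ℝ≥0 | p 0 + p 1 = 1}) = ⨅ t, J t) :=
  ⟨fun ⟨_, a, e, h⟩ => antidiagonalIdeal_ne_iSup_Iideal a e h,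
    fun ⟨_, J, hmon, hirr, h⟩ => antidiagonalIdeal_ne_iInf_of_mIrred J hmon hirr h⟩
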